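/- arXiv:2502.02726 — 2 statements merged into one kernel-verified Lean document; each statement's English description precedes it below -/
import Mathlib

section
/- Cluster points of entropic optimal couplings are multimarginal optimal transport solutions: For each ε > 0 let π*_ε be a minimizer of π ↦ ∫ c_α dπ + ε · KL(π ‖ ν_1⊗⋯⊗ν_m) over Π(ν_1,…,ν_m). If ε_k → 0⁺ and π*_{ε_k} converges weakly to some probability measure π_0 on 𝒳^m, then π_0 ∈ Π(ν_1,…,ν_m) and π_0 minimizes π ↦ ∫ c_α dπ over Π(ν_1,…,ν_m). -/
open MeasureTheory ProbabilityTheory Filter Topology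
open scoped ENNReal NNReal

noncomputable section

/-- `ℝ^d` with the Euclidean norm. -/
abbrev Euc (d : ℕ) : Type := EuclideanSpace ℝ (Fin d)

/-- The multimarginal cost `c_α(x₁,…,x_m) = ∑_{i<j} ‖α_i x_i − α_j x_j‖²`. -/
def costα {m d : ℕ} (α : Fin m → ℝ) (x : Fin m → Euc d) : ℝ :=
  ∑ i : Fin m, ∑ j : Fin m, if i < j then ‖α i • x i - α j • x j‖ ^ 2 else 0

open scoped Classical in
/-- Kullback–Leibler divergence, valued in `ℝ≥0∞` (it is nonnegative for probability
measures): `KL(P‖Q) = ∫ log (dP/dQ) dP` when `P ≪ Q` and the integrand is integrable,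
and `∞` otherwise. -/
def KLdiv {E : Type*} [MeasurableSpace E] (P Q : Measure E) : ℝ≥0∞ :=
  if P ≪ Q ∧ Integrable (fun x => Real.log ((P.rnDeriv Q x).toReal)) P
  then ENNReal.ofReal (∫ x, Real.log ((P.rnDeriv Q x).toReal) ∂P) else ⊤

/-- The entropic multimarginal transport functional
`π ↦ ∫ c_α dπ + ε KL(π ‖ ν₁⊗⋯⊗ν_m)`, valued in `ℝ≥0∞`. -/
def entCost {m d : ℕ} (α : Fin m → ℝ) (ε : ℝ) (ν : Fin m → Measure (Euc d))
    (π : Measure (Fin m → Euc d)) : ℝ≥0∞ :=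
  ∫⁻ x, ENNReal.ofReal (costα α x) ∂π + ENNReal.ofReal ε * KLdiv π (Measure.pi ν)

/-- Membership in the coupling set `Π(ν₁,…,ν_m)`: a probability measure on `𝒳^m`
whose `j`-th marginal is `ν j` for every `j`. -/
def IsCoupling {m d : ℕ} (ν : Fin m → Measure (Euc d))
    (π : Measure (Fin m → Euc d)) : Prop :=
  IsProbabilityMeasure π ∧ ∀ j, π.map (fun x => x j) = ν j

end

/-!
Marginals pass to the weak limit `π₀` by testing against `f ∘ eval_j`. Couplings live on the
compact set `𝒳^m`, where the cost agrees with a bounded continuous truncation, so the cost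
integral passes to the limit too. For minimality, fix a coupling `π` and `η > 0`. Partition `𝒳`
into finitely many measurable pieces of small diameter and, on every product cell, replace `π` by
the product of the marginals `ν_i` conditioned on the faces of the cell. The result `π'` is again
a coupling, its cost exceeds that of `π` by at most `η` (uniform continuity of the cost on `𝒳^m`),
and its density with respect to `ν₁ ⊗ ⋯ ⊗ ν_m` is constant on cells, so
`KL(π' ‖ ν₁ ⊗ ⋯ ⊗ ν_m) < ∞`. Optimality of `π*_ε` gives
`∫ c dπ*_ε ≤ ∫ c dπ' + ε KL(π' ‖ ν₁ ⊗ ⋯ ⊗ ν_m)`, and `ε → 0` yields `∫ c dπ₀ ≤ ∫ c dπ + η`.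
-/

open Set

theorem IsCompact.exists_measurable_fin_dist_lt {X : Type*} [MetricSpace X]
    [TopologicalSpace.SeparableSpace X] [MeasurableSpace X] [OpensMeasurableSpace X]
    {K : Set X} (hK : IsCompact K) {δ : ℝ} (hδ : 0 < δ) :
    ∃ (N : ℕ) (T : X → Fin N), Measurable T ∧
      ∀ x ∈ K, ∀ y ∈ K, T x = T y → dist x y < δ := by
  rcases isEmpty_or_nonempty X with hX | hX
  · exact ⟨0, isEmptyElim, measurable_of_subsingleton_codomain _, fun x => isEmptyElim x⟩
  set e := TopologicalSpace.denseSeq X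
  obtain ⟨t, ht⟩ : ∃ t : Finset ℕ, K ⊆ ⋃ k ∈ t, Metric.ball (e k) (δ / 2) := by
    refine hK.elim_finite_subcover _ (fun _ => Metric.isOpen_ball) fun x _ => ?_
    obtain ⟨k, hk⟩ := Metric.denseRange_iff.1 (TopologicalSpace.denseRange_denseSeq X) x
      (δ / 2) (by positivity)
    exact mem_iUnion.2 ⟨k, hk⟩
  set N := t.sup id
  have hnear : ∀ x ∈ K, dist (e (SimpleFunc.nearestPtInd e N x)) x < δ / 2 := by
    intro x hx
    obtain ⟨k, hkt, hxk⟩ := mem_iUnion₂.1 (ht hx)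
    have hle := SimpleFunc.edist_nearestPt_le e x (Finset.le_sup (f := id) hkt)
    rw [edist_dist, edist_dist, ENNReal.ofReal_le_ofReal_iff dist_nonneg] at hle
    exact hle.trans_lt (by rwa [dist_comm])
  refine ⟨N + 1, fun x => ⟨SimpleFunc.nearestPtInd e N x,
    Nat.lt_succ_of_le (SimpleFunc.nearestPtInd_le e N x)⟩, ?_, fun x hx y hy hxy => ?_⟩
  · refine measurable_to_countable' fun k => ?_
    convert (SimpleFunc.nearestPtInd e N).measurableSet_fiber k.val using 1
    ext x
    simp [Fin.ext_iff]
  · have hxy' : SimpleFunc.nearestPtInd e N x = SimpleFunc.nearestPtInd e N y :=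
      congrArg Fin.val hxy
    calc dist x y ≤ dist (e (SimpleFunc.nearestPtInd e N x)) x
          + dist (e (SimpleFunc.nearestPtInd e N y)) y := by
          rw [hxy']; exact dist_triangle_left _ _ _
      _ < δ / 2 + δ / 2 := add_lt_add (hnear x hx) (hnear y hy)
      _ = δ := add_halves δ

theorem IsCompact.exists_boundedContinuous_nonneg_ofReal_eqOn {Y : Type*} [TopologicalSpace Y]
    {K : Set Y} (hK : IsCompact K) {c : Y → ℝ} (hc : Continuous c) :
    ∃ g : BoundedContinuousFunction Y ℝ, 0 ≤ g ∧
      ∀ y ∈ K, ENNReal.ofReal (g y) = ENNReal.ofReal (c y) := by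
  obtain ⟨M, hM⟩ := hK.exists_bound_of_continuousOn hc.continuousOn
  have hmem : ∀ y, max (min (c y) M) 0 ∈ Icc 0 (max M 0) :=
    fun y => ⟨le_max_right _ _, max_le_max_right _ (min_le_right _ _)⟩
  refine ⟨.mkOfBound ⟨fun y => max (min (c y) M) 0, by fun_prop⟩ (max M 0)
    fun x y => by simpa using Real.dist_le_of_mem_Icc (hmem x) (hmem y),
    fun y => (hmem y).1, fun y hy => ?_⟩
  have hcM : c y ≤ M := (le_abs_self _).trans (hM y hy)
  simp [min_eq_left hcM, ENNReal.ofReal_max]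

section WeakLimit

variable {α Y : Type*} [TopologicalSpace Y] [MeasurableSpace Y] [OpensMeasurableSpace Y]
  {l : Filter α} {μ : α → Measure Y} {μ₀ : Measure Y}

theorem map_eq_of_tendsto_integral [l.NeBot] [IsFiniteMeasure μ₀]
    {X : Type*} [TopologicalSpace X] [MeasurableSpace X] [BorelSpace X] [HasOuterApproxClosed X]
    {φ : Y → X} (hφ : Continuous φ) {ν : Measure X} [IsFiniteMeasure ν]
    (hμν : ∀ a, (μ a).map φ = ν)
    (hconv : ∀ f : BoundedContinuousFunction Y ℝ,
      Tendsto (fun a => ∫ y, f y ∂μ a) l (𝓝 (∫ y, f y ∂μ₀))) :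
    μ₀.map φ = ν := by
  refine ext_of_forall_integral_eq_of_IsFiniteMeasure fun f => ?_
  have hpull : ∀ ρ : Measure Y, ∫ x, f x ∂ρ.map φ = ∫ y, f.compContinuous ⟨φ, hφ⟩ y ∂ρ :=
    fun ρ => integral_map hφ.aemeasurable f.continuous.aestronglyMeasurable
  rw [hpull]
  refine tendsto_nhds_unique (hconv (f.compContinuous ⟨φ, hφ⟩)) ?_
  simp_rw [← hpull, hμν]
  exact tendsto_const_nhds

theorem tendsto_lintegral_ofReal_of_tendsto_integral [∀ a, IsFiniteMeasure (μ a)]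
    [IsFiniteMeasure μ₀] {K : Set Y} (hK : IsCompact K)
    {c : Y → ℝ} (hc : Continuous c) (hμK : ∀ a, ∀ᵐ y ∂μ a, y ∈ K) (hμ₀K : ∀ᵐ y ∂μ₀, y ∈ K)
    (hconv : ∀ f : BoundedContinuousFunction Y ℝ,
      Tendsto (fun a => ∫ y, f y ∂μ a) l (𝓝 (∫ y, f y ∂μ₀))) :
    Tendsto (fun a => ∫⁻ y, ENNReal.ofReal (c y) ∂μ a) l
      (𝓝 (∫⁻ y, ENNReal.ofReal (c y) ∂μ₀)) := by
  obtain ⟨g, hg0, hgc⟩ := hK.exists_boundedContinuous_nonneg_ofReal_eqOn hc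
  have hlint : ∀ ρ : Measure Y, [IsFiniteMeasure ρ] → (∀ᵐ y ∂ρ, y ∈ K) →
      ∫⁻ y, ENNReal.ofReal (c y) ∂ρ = ENNReal.ofReal (∫ y, g y ∂ρ) := by
    intro ρ _ hρK
    rw [ofReal_integral_eq_lintegral_ofReal (g.integrable ρ) (.of_forall hg0)]
    exact lintegral_congr_ae (hρK.mono fun y hy => (hgc y hy).symm)
  simp_rw [hlint _ (hμK _), hlint _ hμ₀K]
  exact (ENNReal.continuous_ofReal.tendsto _).comp (hconv g)

end WeakLimit

theorem MeasureTheory.Measure.withDensity_comp_eq_sum {E κ : Type*} [MeasurableSpace E]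
    [Fintype κ] [MeasurableSpace κ] [MeasurableSingletonClass κ] (Q : Measure E) {G : E → κ}
    (hG : Measurable G) (w : κ → ℝ≥0∞) :
    Q.withDensity (fun x => w (G x)) = ∑ z, w z • Q.restrict (G ⁻¹' {z}) := by
  ext s hs
  rw [withDensity_apply _ hs, ← lintegral_map (measurable_of_finite w) hG, lintegral_fintype,
    Measure.finsetSum_apply]
  refine Finset.sum_congr rfl fun z _ => ?_
  rw [Measure.map_apply hG (measurableSet_singleton z), Measure.restrict_apply
    (hG (measurableSet_singleton z)), Measure.smul_apply, smul_eq_mul,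
    Measure.restrict_apply hs, inter_comm]

theorem MeasureTheory.Measure.sum_restrict_preimage_singleton {E κ : Type*} [MeasurableSpace E]
    [Fintype κ] [MeasurableSpace κ] [MeasurableSingletonClass κ] (Q : Measure E) {G : E → κ}
    (hG : Measurable G) : ∑ z, Q.restrict (G ⁻¹' {z}) = Q := by
  simpa using (Q.withDensity_comp_eq_sum hG fun _ => 1).symm

theorem MeasureTheory.Measure.pi_cond {ι : Type*} [Fintype ι] {α : ι → Type*}
    [∀ i, MeasurableSpace (α i)] (μ : ∀ i, Measure (α i)) [∀ i, SigmaFinite (μ i)]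
    {s : ∀ i, Set (α i)} (hs : ∀ i, MeasurableSet (s i)) :
    Measure.pi (fun i => (μ i)[|s i]) =
      (∏ i, (μ i (s i))⁻¹) • (Measure.pi μ).restrict (univ.pi s) := by
  refine Measure.pi_eq fun t ht => ?_
  rw [Measure.smul_apply, smul_eq_mul, Measure.restrict_apply (.univ_pi ht),
    ← Set.pi_inter_distrib, Measure.pi_pi, ← Finset.prod_mul_distrib]
  simp_rw [cond_apply (hs _), inter_comm]

theorem KLdiv_withDensity_comp_ne_top {E κ : Type*} [MeasurableSpace E] [Finite κ]
    [MeasurableSpace κ] [MeasurableSingletonClass κ] (Q : Measure E) [SigmaFinite Q]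
    {G : E → κ} (hG : Measurable G) (w : κ → ℝ≥0∞)
    [IsFiniteMeasure (Q.withDensity fun x => w (G x))] :
    KLdiv (Q.withDensity fun x => w (G x)) Q ≠ ⊤ := by
  set P := Q.withDensity fun x => w (G x)
  have hac : P ≪ Q := withDensity_absolutelyContinuous _ _
  obtain ⟨B, hB⟩ := Finite.exists_le fun z => |Real.log (w z).toReal|
  have hint : Integrable (fun x => Real.log (P.rnDeriv Q x).toReal) P := by
    refine .of_bound (Measure.measurable_rnDeriv P Q).ennreal_toReal.log.aestronglyMeasurable
      B ?_
    filter_upwards [hac.ae_le (Q.rnDeriv_withDensity (f := fun x => w (G x))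
      ((measurable_of_finite w).comp hG))] with x hx
    rw [hx, Real.norm_eq_abs]
    exact hB (G x)
  rw [KLdiv, if_pos ⟨hac, hint⟩]
  exact ENNReal.ofReal_ne_top

section BlockApprox

variable {ι X κ : Type*} {T : X → κ}

def blockCell (T : X → κ) (z : ι → κ) : Set (ι → X) := univ.pi fun i => T ⁻¹' {z i}

theorem preimage_blockCell (T : X → κ) (z : ι → κ) :
    (fun x i => T (x i)) ⁻¹' {z} = blockCell T z := by
  ext x; simp [blockCell, funext_iff]

variable [MeasurableSpace X] {ν : ι → Measure X} {π : Measure (ι → X)}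

theorem ae_forall_mem_of_map_eval [Finite ι] (hπν : ∀ i, π.map (fun x => x i) = ν i)
    {K : Set X} (hνK : ∀ i, ∀ᵐ y ∂ν i, y ∈ K) : ∀ᵐ x ∂π, ∀ i, x i ∈ K :=
  Filter.eventually_all.2 fun i =>
    ae_of_ae_map (measurable_pi_apply i).aemeasurable (by rw [hπν i]; exact hνK i)

variable [MeasurableSpace κ]

theorem Measurable.comp_apply_pi (hT : Measurable T) :
    Measurable fun (x : ι → X) i => T (x i) := by
  fun_prop

theorem measurableSet_blockCell [Countable ι] [MeasurableSingletonClass κ] (hT : Measurable T)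
    (z : ι → κ) : MeasurableSet (blockCell T z) :=
  .univ_pi fun i => hT (.singleton (z i))

theorem isProbabilityMeasure_cond_of_measure_blockCell_ne_zero [MeasurableSingletonClass κ]
    [∀ i, IsFiniteMeasure (ν i)] (hT : Measurable T) (hπν : ∀ i, π.map (fun x => x i) = ν i)
    {z : ι → κ} (hz : π (blockCell T z) ≠ 0) (i : ι) :
    IsProbabilityMeasure ((ν i)[|T ← z i]) := by
  refine cond_isProbabilityMeasure (ne_bot_of_le_ne_bot hz ?_)
  rw [← hπν i, Measure.map_apply (measurable_pi_apply i) (hT (.singleton _))]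
  exact measure_mono fun x hx => hx i (mem_univ i)

theorem measure_blockCell_mul_lintegral_le [Fintype ι] [MeasurableSingletonClass κ]
    [∀ i, IsFiniteMeasure (ν i)] (hT : Measurable T)
    (hπν : ∀ i, π.map (fun x => x i) = ν i) {K : Set X} (hνK : ∀ i, ∀ᵐ y ∂ν i, y ∈ K)
    {f : (ι → X) → ℝ≥0∞} {η : ℝ≥0∞}
    (hf : ∀ x ∈ univ.pi fun _ => K, ∀ y ∈ univ.pi fun _ => K,
      (∀ i, T (x i) = T (y i)) → f x ≤ f y + η) (z : ι → κ) :
    π (blockCell T z) * ∫⁻ x, f x ∂Measure.pi (fun i => (ν i)[|T ← z i])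
      ≤ ∫⁻ x in blockCell T z, f x ∂π + π (blockCell T z) * η := by
  rcases eq_or_ne (π (blockCell T z)) 0 with hz | hz
  · simp [hz]
  have := isProbabilityMeasure_cond_of_measure_blockCell_ne_zero hT hπν hz
  have hpiK : ∀ᵐ x ∂Measure.pi (fun i => (ν i)[|T ← z i]), ∀ i, x i ∈ K ∧ T (x i) = z i :=
    Filter.eventually_all.2 fun i =>
      (Measure.tendsto_eval_ae_ae (μ := fun i => (ν i)[|T ← z i]) (i := i)).eventually <|
      ((hνK i).filter_mono cond_absolutelyContinuous.ae_le).and (ae_cond_mem (hT (.singleton _)))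
  have hbound : ∀ᵐ y ∂π.restrict (blockCell T z),
      ∫⁻ x, f x ∂Measure.pi (fun i => (ν i)[|T ← z i]) ≤ f y + η := by
    filter_upwards [ae_restrict_mem (measurableSet_blockCell hT z),
      ae_restrict_of_ae (ae_forall_mem_of_map_eval hπν hνK)] with y hyz hyK
    calc ∫⁻ x, f x ∂Measure.pi (fun i => (ν i)[|T ← z i])
        ≤ ∫⁻ _, f y + η ∂Measure.pi (fun i => (ν i)[|T ← z i]) :=
          lintegral_mono_ae <| hpiK.mono fun x hx =>
            hf x (fun i _ => (hx i).1) y (fun i _ => hyK i)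
              fun i => (hx i).2.trans (hyz i (mem_univ i)).symm
      _ = f y + η := by simp
  calc π (blockCell T z) * ∫⁻ x, f x ∂Measure.pi (fun i => (ν i)[|T ← z i])
      = ∫⁻ _ in blockCell T z, ∫⁻ x, f x ∂Measure.pi (fun i => (ν i)[|T ← z i]) ∂π := by
        rw [setLIntegral_const, mul_comm]
    _ ≤ ∫⁻ y in blockCell T z, f y + η ∂π := lintegral_mono_ae hbound
    _ = ∫⁻ x in blockCell T z, f x ∂π + π (blockCell T z) * η := by
        rw [lintegral_add_right _ measurable_const, setLIntegral_const, mul_comm]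

variable [Fintype ι] [DecidableEq ι] [Fintype κ] [DiscreteMeasurableSpace κ]

theorem sum_restrict_blockCell (hT : Measurable T) : ∑ z, π.restrict (blockCell T z) = π := by
  simpa only [preimage_blockCell] using π.sum_restrict_preimage_singleton hT.comp_apply_pi

theorem sum_measure_blockCell (hT : Measurable T) : ∑ z, π (blockCell T z) = π univ := by
  calc ∑ z, π (blockCell T z) = (∑ z, π.restrict (blockCell T z)) univ := by
        simp [Measure.finsetSum_apply]
    _ = π univ := by rw [sum_restrict_blockCell hT]

theorem sum_measure_blockCell_of_apply_eq [DecidableEq κ] (hT : Measurable T)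
    (hπν : ∀ i, π.map (fun x => x i) = ν i) (i : ι) (w : κ) :
    ∑ z with z i = w, π (blockCell T z) = ν i (T ⁻¹' {w}) := by
  have hG := hT.comp_apply_pi (ι := ι)
  simp_rw [← preimage_blockCell, ← Measure.map_apply hG (measurableSet_singleton _)]
  rw [sum_measure_singleton, Measure.map_apply hG (Finset.measurableSet _), ← hπν i,
    Measure.map_apply (measurable_pi_apply i) (hT (measurableSet_singleton w))]
  congr 1
  ext x; simp

noncomputable def blockApprox (T : X → κ) (ν : ι → Measure X) (π : Measure (ι → X)) :
    Measure (ι → X) :=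
  ∑ z : ι → κ, π (blockCell T z) • Measure.pi fun i => (ν i)[|T ← z i]

noncomputable def blockDensity (T : X → κ) (ν : ι → Measure X) (π : Measure (ι → X))
    (z : ι → κ) : ℝ≥0∞ :=
  π (blockCell T z) * ∏ i, (ν i (T ⁻¹' {z i}))⁻¹

variable [∀ i, IsFiniteMeasure (ν i)]

theorem map_eval_blockApprox (hT : Measurable T) (hπν : ∀ i, π.map (fun x => x i) = ν i)
    (j : ι) : (blockApprox T ν π).map (fun x => x j) = ν j := by
  classical
  have hcell : ∀ z, (π (blockCell T z) • Measure.pi fun i => (ν i)[|T ← z i]).map (fun x => x j)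
      = π (blockCell T z) • (ν j)[|T ← z j] := by
    intro z
    rcases eq_or_ne (π (blockCell T z)) 0 with hz | hz
    · simp [hz]
    · have := isProbabilityMeasure_cond_of_measure_blockCell_ne_zero hT hπν hz
      rw [Measure.map_smul, (measurePreserving_eval _ j).map_eq]
  calc (blockApprox T ν π).map (fun x => x j)
      = ∑ z : ι → κ, π (blockCell T z) • (ν j)[|T ← z j] := by
        rw [blockApprox, Measure.map_finset_sum' (measurable_pi_apply j).aemeasurable]
        exact Finset.sum_congr rfl fun z _ => hcell z
    _ = ∑ w, ν j (T ⁻¹' {w}) • (ν j)[|T ← w] := by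
        rw [← Finset.sum_fiberwise _ (fun z => z j)]
        refine Finset.sum_congr rfl fun w _ => ?_
        rw [← sum_measure_blockCell_of_apply_eq hT hπν j w, Finset.sum_smul]
        exact Finset.sum_congr rfl fun z hz => by rw [(Finset.mem_filter.1 hz).2]
    _ = ν j := sum_meas_smul_cond_fiber hT (ν j)

theorem isProbabilityMeasure_blockApprox [IsProbabilityMeasure π] (hT : Measurable T)
    (hπν : ∀ i, π.map (fun x => x i) = ν i) : IsProbabilityMeasure (blockApprox T ν π) := by
  constructor
  have hcell : ∀ z, π (blockCell T z) * Measure.pi (fun i => (ν i)[|T ← z i]) univ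
      = π.restrict (blockCell T z) univ := by
    intro z
    rw [Measure.restrict_apply_univ]
    rcases eq_or_ne (π (blockCell T z)) 0 with hz | hz
    · simp [hz]
    · have := isProbabilityMeasure_cond_of_measure_blockCell_ne_zero hT hπν hz
      rw [measure_univ, mul_one]
  rw [blockApprox, Measure.finsetSum_apply]
  simp_rw [Measure.smul_apply, smul_eq_mul, hcell]
  rw [← Measure.finsetSum_apply, sum_restrict_blockCell hT, measure_univ]

theorem blockApprox_eq_withDensity (hT : Measurable T) :
    blockApprox T ν π =
      (Measure.pi ν).withDensity fun x => blockDensity T ν π fun i => T (x i) := by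
  rw [Measure.withDensity_comp_eq_sum _ hT.comp_apply_pi, blockApprox]
  refine Finset.sum_congr rfl fun z _ => ?_
  rw [Measure.pi_cond _ fun i => hT (.singleton (z i)), smul_smul, preimage_blockCell,
    blockDensity, blockCell]

theorem KLdiv_blockApprox_ne_top [IsProbabilityMeasure π] (hT : Measurable T)
    (hπν : ∀ i, π.map (fun x => x i) = ν i) : KLdiv (blockApprox T ν π) (Measure.pi ν) ≠ ⊤ := by
  have := isProbabilityMeasure_blockApprox hT hπν
  rw [blockApprox_eq_withDensity hT] at this ⊢
  exact KLdiv_withDensity_comp_ne_top _ hT.comp_apply_pi _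

theorem lintegral_blockApprox_le [IsProbabilityMeasure π] (hT : Measurable T)
    (hπν : ∀ i, π.map (fun x => x i) = ν i) {K : Set X} (hνK : ∀ i, ∀ᵐ y ∂ν i, y ∈ K)
    {f : (ι → X) → ℝ≥0∞} {η : ℝ≥0∞}
    (hf : ∀ x ∈ univ.pi fun _ => K, ∀ y ∈ univ.pi fun _ => K,
      (∀ i, T (x i) = T (y i)) → f x ≤ f y + η) :
    ∫⁻ x, f x ∂blockApprox T ν π ≤ ∫⁻ x, f x ∂π + η :=
  calc ∫⁻ x, f x ∂blockApprox T ν π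
      = ∑ z, π (blockCell T z) * ∫⁻ x, f x ∂Measure.pi (fun i => (ν i)[|T ← z i]) := by
        simp_rw [blockApprox, lintegral_finsetSum_measure, lintegral_smul_measure, smul_eq_mul]
    _ ≤ ∑ z, (∫⁻ x in blockCell T z, f x ∂π + π (blockCell T z) * η) :=
        Finset.sum_le_sum fun z _ => measure_blockCell_mul_lintegral_le hT hπν hνK hf z
    _ = ∫⁻ x, f x ∂π + η := by
        rw [Finset.sum_add_distrib, ← Finset.sum_mul, ← lintegral_finsetSum_measure,
          sum_restrict_blockCell hT, sum_measure_blockCell hT, measure_univ, one_mul]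

end BlockApprox

theorem costα_continuous {m d : ℕ} (α : Fin m → ℝ) : Continuous (costα (d := d) α) := by
  unfold costα
  refine continuous_finsetSum _ fun i _ => continuous_finsetSum _ fun j _ => ?_
  split_ifs <;> fun_prop

section Coupling

variable {m d : ℕ} {ν : Fin m → Measure (Euc d)} [∀ j, IsProbabilityMeasure (ν j)]
  {𝒳 : Set (Euc d)} {π : Measure (Fin m → Euc d)}

theorem IsCoupling.ae_mem_pi (hπ : IsCoupling ν π) (h𝒳 : MeasurableSet 𝒳)
    (hν𝒳 : ∀ j, ν j 𝒳 = 1) : ∀ᵐ x ∂π, x ∈ univ.pi fun _ => 𝒳 :=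
  (ae_forall_mem_of_map_eval hπ.2 fun j =>
    mem_ae_iff.2 ((prob_compl_eq_zero_iff h𝒳).2 (hν𝒳 j))).mono fun _ hx j _ => hx j

theorem IsCoupling.exists_KLdiv_ne_top_lintegral_le (hπ : IsCoupling ν π) (h𝒳 : IsCompact 𝒳)
    (hν𝒳 : ∀ j, ν j 𝒳 = 1) {c : (Fin m → Euc d) → ℝ} (hc : Continuous c) {η : ℝ} (hη : 0 < η) :
    ∃ π', IsCoupling ν π' ∧ KLdiv π' (Measure.pi ν) ≠ ⊤ ∧
      ∫⁻ x, ENNReal.ofReal (c x) ∂π' ≤ ∫⁻ x, ENNReal.ofReal (c x) ∂π + ENNReal.ofReal η := by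
  obtain ⟨hπ, hπν⟩ := hπ
  obtain ⟨δ, hδ, hcδ⟩ := Metric.uniformContinuousOn_iff.1
    ((isCompact_univ_pi fun _ => h𝒳).uniformContinuousOn_of_continuous hc.continuousOn) η hη
  obtain ⟨N, T, hT, hTδ⟩ := h𝒳.exists_measurable_fin_dist_lt hδ
  refine ⟨blockApprox T ν π, ⟨isProbabilityMeasure_blockApprox hT hπν,
    map_eval_blockApprox hT hπν⟩, KLdiv_blockApprox_ne_top hT hπν,
    lintegral_blockApprox_le hT hπν
      (fun j => mem_ae_iff.2 ((prob_compl_eq_zero_iff h𝒳.measurableSet).2 (hν𝒳 j)))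
      fun x hx y hy hxy => ?_⟩
  have hcxy := hcδ x hx y hy <| (dist_pi_lt_iff hδ).2 fun i =>
    hTδ _ (hx i (mem_univ i)) _ (hy i (mem_univ i)) (hxy i)
  rw [Real.dist_eq, abs_sub_lt_iff] at hcxy
  exact (ENNReal.ofReal_le_ofReal (by linarith)).trans ENNReal.ofReal_add_le

end Coupling

theorem cluster_points_minimize_general {d m : ℕ}
    (𝒳 : Set (Euc d)) (h𝒳c : IsCompact 𝒳)
    (ν : Fin m → Measure (Euc d)) (hν : ∀ j, IsProbabilityMeasure (ν j))
    (hνsupp : ∀ j, ν j 𝒳 = 1)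
    (α : Fin m → ℝ)
    (πopt : ℝ → Measure (Fin m → Euc d))
    (hopt : ∀ ε : ℝ, 0 < ε → IsCoupling ν (πopt ε) ∧
      ∀ π, IsCoupling ν π → entCost α ε ν (πopt ε) ≤ entCost α ε ν π)
    (εk : ℕ → ℝ) (hεk : ∀ k, 0 < εk k) (hεk0 : Tendsto εk atTop (𝓝 0))
    (π₀ : Measure (Fin m → Euc d)) (hπ₀ : IsProbabilityMeasure π₀)
    (hconv : ∀ f : BoundedContinuousFunction (Fin m → Euc d) ℝ,
      Tendsto (fun k => ∫ x, f x ∂(πopt (εk k))) atTop (𝓝 (∫ x, f x ∂π₀))) :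
    IsCoupling ν π₀ ∧
    ∀ π, IsCoupling ν π →
      ∫⁻ x, ENNReal.ofReal (costα α x) ∂π₀ ≤ ∫⁻ x, ENNReal.ofReal (costα α x) ∂π := by
  have hcoup : ∀ k, IsCoupling ν (πopt (εk k)) := fun k => (hopt _ (hεk k)).1
  have (k : ℕ) : IsProbabilityMeasure (πopt (εk k)) := (hcoup k).1
  have hπ₀c : IsCoupling ν π₀ :=
    ⟨hπ₀, fun j => map_eq_of_tendsto_integral (continuous_apply j) (fun k => (hcoup k).2 j) hconv⟩
  refine ⟨hπ₀c, fun π hπ => ENNReal.le_of_forall_pos_le_add fun η hη _ => ?_⟩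
  have hcost := tendsto_lintegral_ofReal_of_tendsto_integral (isCompact_univ_pi fun _ => h𝒳c)
    (costα_continuous α) (fun k => (hcoup k).ae_mem_pi h𝒳c.measurableSet hνsupp)
    (hπ₀c.ae_mem_pi h𝒳c.measurableSet hνsupp) hconv
  obtain ⟨π', hπ', hKL, hπ'π⟩ :=
    hπ.exists_KLdiv_ne_top_lintegral_le h𝒳c hνsupp (costα_continuous α) (NNReal.coe_pos.2 hη)
  have hent : Tendsto (fun k => ∫⁻ x, ENNReal.ofReal (costα α x) ∂π'
      + ENNReal.ofReal (εk k) * KLdiv π' (Measure.pi ν)) atTop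
      (𝓝 (∫⁻ x, ENNReal.ofReal (costα α x) ∂π')) := by
    have hε : Tendsto (fun k => ENNReal.ofReal (εk k)) atTop (𝓝 0) := by
      simpa using ENNReal.tendsto_ofReal hεk0
    simpa using tendsto_const_nhds.add (ENNReal.Tendsto.mul_const hε (.inr hKL))
  calc ∫⁻ x, ENNReal.ofReal (costα α x) ∂π₀ ≤ ∫⁻ x, ENNReal.ofReal (costα α x) ∂π' :=
        le_of_tendsto_of_tendsto' hcost hent fun k => le_self_add.trans ((hopt _ (hεk k)).2 π' hπ')
    _ ≤ ∫⁻ x, ENNReal.ofReal (costα α x) ∂π + η := by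
        simpa only [ENNReal.ofReal_coe_nnreal] using hπ'π

/-- **Cluster points of entropic optimal couplings are MOT solutions.** If for each
`ε > 0`, `π* ε` minimizes `π ↦ ∫ c_α dπ + ε · KL(π ‖ ν₁⊗⋯⊗ν_m)` over
`Π(ν₁,…,ν_m)`, `εk k → 0⁺` and `π* (εk k)` converges weakly to a probability measure
`π₀`, then `π₀ ∈ Π(ν₁,…,ν_m)` and `π₀` minimizes `π ↦ ∫ c_α dπ` over `Π(ν₁,…,ν_m)`. -/
theorem cluster_points_minimize {d m : ℕ} (hm : 0 < m)
    (𝒳 : Set (Euc d)) (h𝒳c : IsCompact 𝒳) (h𝒳b : ∀ x ∈ 𝒳, ∀ i, |x i| ≤ 1)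
    (h𝒳int : (interior 𝒳).Nonempty)
    (ν : Fin m → Measure (Euc d)) (hν : ∀ j, IsProbabilityMeasure (ν j))
    (hνsupp : ∀ j, ν j 𝒳 = 1)
    (α : Fin m → ℝ) (hα : ∀ i, 0 ≤ α i) (hα1 : ∑ i, α i = 1)
    (πopt : ℝ → Measure (Fin m → Euc d))
    (hopt : ∀ ε : ℝ, 0 < ε → IsCoupling ν (πopt ε) ∧
      ∀ π, IsCoupling ν π → entCost α ε ν (πopt ε) ≤ entCost α ε ν π)
    (εk : ℕ → ℝ) (hεk : ∀ k, 0 < εk k) (hεk0 : Tendsto εk atTop (𝓝 0))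
    (π₀ : Measure (Fin m → Euc d)) (hπ₀ : IsProbabilityMeasure π₀)
    (hconv : ∀ f : BoundedContinuousFunction (Fin m → Euc d) ℝ,
      Tendsto (fun k => ∫ x, f x ∂(πopt (εk k))) atTop (𝓝 (∫ x, f x ∂π₀))) :
    IsCoupling ν π₀ ∧
    ∀ π, IsCoupling ν π →
      ∫⁻ x, ENNReal.ofReal (costα α x) ∂π₀ ≤ ∫⁻ x, ENNReal.ofReal (costα α x) ∂π :=
  cluster_points_minimize_general 𝒳 h𝒳c ν hν hνsupp α πopt hopt εk hεk hεk0 π₀ hπ₀ hconv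
end

section
/- Concavity and strong concavity of the dual objective: Define Φ_{α,ε}(f) = Σ_{j=1}^m ∫ f_j dν_j − ε ∫ exp((Σ_{j=1}^m f_j(x_j) − c_α(x))/ε) d(ν_1⊗⋯⊗ν_m)(x) for f = (f_1,…,f_m), f_j ∈ L^∞(ν_j), with gradient pairing ⟨∇Φ_{α,ε}(f), g⟩ = ∫ (Σ_{j=1}^m g_j(x_j))(1 − exp((Σ_{i} f_i(x_i) − c_α(x))/ε)) d(ν_1⊗⋯⊗ν_m)(x) and norm ‖g‖_{𝓛_m}² = Σ_{j=1}^m ∫ g_j² dν_j. Then: (i) Φ_{α,ε}(f) − Φ_{α,ε}(g) ≥ ⟨∇Φ_{α,ε}(f), f − g⟩ for all tuples f, g of bounded functions; and (ii) for L ≥ 0 and β = ε^{-1} exp(−(L + ‖c_α‖_∞)/ε), for all f, g in the set S_L = { f : ‖Σ_{j=1}^m f_j(x_j)‖_{L^∞(ν_1⊗⋯⊗ν_m)} ≤ L and ∫ f_i dν_i = 0 for i ∈ {1,…,m−1} }, one has Φ_{α,ε}(f) − Φ_{α,ε}(g) ≥ ⟨∇Φ_{α,ε}(f), f − g⟩ +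 (β/2)‖f − g‖_{𝓛_m}². -/
open MeasureTheory ProbabilityTheory Filter Topology
open scoped ENNReal NNReal

/-- The dual objective `Φ_{α,ε}(f) = ∑ j ∫ f j dν j − ε ∫ exp((∑ j f j (x j) − c_α x)/ε) d(⊗ ν)`. -/
noncomputable def dualObj {m d : ℕ} (α : Fin m → ℝ) (ε : ℝ) (ν : Fin m → Measure (Euc d))
    (f : Fin m → Euc d → ℝ) : ℝ :=
  ∑ j, ∫ x, f j x ∂(ν j)
    - ε * ∫ y, Real.exp ((∑ j, f j (y j) - costα α y) / ε) ∂(Measure.pi ν)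

/-- The gradient pairing `⟨∇Φ_{α,ε}(f), g⟩`. -/
noncomputable def gradPairing {m d : ℕ} (α : Fin m → ℝ) (ε : ℝ) (ν : Fin m → Measure (Euc d))
    (f g : Fin m → Euc d → ℝ) : ℝ :=
  ∫ y, (∑ j, g j (y j)) *
    (1 - Real.exp ((∑ i, f i (y i) - costα α y) / ε)) ∂(Measure.pi ν)


/-! Write `u_f = (∑ⱼ fⱼ(xⱼ) − c_α)/ε`. Pointwise, the integrand of
`Φ(f) − Φ(g) − ⟨∇Φ(f), f − g⟩` is `ε` times the Bregman divergence
`e^{u_g} − e^{u_f} − (u_g − u_f) e^{u_f}` of `exp`, which is nonnegative: this is concavity.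
Taylor's theorem bounds the divergence below by `(u_g − u_f)²/2 · e^{min(u_f, u_g)}`, and on
`S_L` both exponents are at least `−(L + ‖c_α‖_∞)/ε`, so the integrand dominates
`β/2 (∑ⱼ (fⱼ − gⱼ)(xⱼ))²`. Under the product measure the cross terms of this square integrate
to products of means, which vanish since all components but the last have mean zero. -/

noncomputable def expBregman (a b : ℝ) : ℝ := Real.exp b - Real.exp a - (b - a) * Real.exp a

lemma expBregman_nonneg (a b : ℝ) : 0 ≤ expBregman a b := by
  have h : expBregman a b = Real.exp a * (Real.exp (b - a) - (b - a + 1)) := by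
    rw [expBregman, Real.exp_sub]; field_simp; ring
  rw [h]
  exact mul_nonneg (Real.exp_pos a).le (sub_nonneg.2 (Real.add_one_le_exp _))

lemma sq_div_two_le_one_add_sub_one_mul_exp {s : ℝ} (hs : 0 ≤ s) :
    s ^ 2 / 2 ≤ 1 + (s - 1) * Real.exp s := by
  let φ : ℝ → ℝ := fun t => 1 + (t - 1) * Real.exp t - t ^ 2 / 2
  have hφ' : ∀ t, HasDerivAt φ (t * (Real.exp t - 1)) t := fun t => by
    have h := ((((hasDerivAt_id t).sub_const 1).mul (Real.hasDerivAt_exp t)).const_add 1).sub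
      ((hasDerivAt_pow 2 t).div_const 2)
    exact h.congr_deriv (by simp only [id, Nat.cast_ofNat]; ring)
  have hmono : MonotoneOn φ (Set.Ici 0) :=
    monotoneOn_of_deriv_nonneg (convex_Ici 0)
      (fun t _ => (hφ' t).continuousAt.continuousWithinAt)
      (fun t _ => (hφ' t).differentiableAt.differentiableWithinAt)
      (fun t ht => by
        rw [interior_Ici, Set.mem_Ioi] at ht
        rw [(hφ' t).deriv]
        exact mul_nonneg ht.le (sub_nonneg.2 (Real.one_le_exp ht.le)))
  have := hmono Set.self_mem_Ici hs hs
  simp only [φ, Real.exp_zero] at this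
  linarith

lemma sq_div_two_mul_exp_min_le_expBregman (a b : ℝ) :
    (b - a) ^ 2 / 2 * Real.exp (min a b) ≤ expBregman a b := by
  rcases le_total a b with hab | hba
  · rw [min_eq_left hab, expBregman, show b = a + (b - a) by ring, Real.exp_add]
    have := Real.quadratic_le_exp_of_nonneg (sub_nonneg.2 hab)
    nlinarith [Real.exp_pos a]
  · rw [min_eq_right hba, expBregman, show a = b + (a - b) by ring, Real.exp_add]
    have := sq_div_two_le_one_add_sub_one_mul_exp (sub_nonneg.2 hba)
    nlinarith [Real.exp_pos b]

lemma mul_expBregman_eq {ε : ℝ} (hε : ε ≠ 0) (F G c : ℝ) :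
    ε * expBregman ((F - c) / ε) ((G - c) / ε)
      = (F - ε * Real.exp ((F - c) / ε)) - (G - ε * Real.exp ((G - c) / ε))
        - (F - G) * (1 - Real.exp ((F - c) / ε)) := by
  unfold expBregman
  field_simp
  ring

lemma mul_exp_mul_sq_le_mul_expBregman {ε L M F G c : ℝ} (hε : 0 < ε) (hF : -L ≤ F)
    (hG : -L ≤ G) (hc : c ≤ M) :
    ε⁻¹ * Real.exp (-(L + M) / ε) / 2 * (F - G) ^ 2
      ≤ ε * expBregman ((F - c) / ε) ((G - c) / ε) := by
  set a := (F - c) / ε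
  set b := (G - c) / ε
  have hmin : -(L + M) / ε ≤ min a b :=
    le_min ((div_le_div_iff_of_pos_right hε).2 (by linarith))
      ((div_le_div_iff_of_pos_right hε).2 (by linarith))
  calc ε⁻¹ * Real.exp (-(L + M) / ε) / 2 * (F - G) ^ 2
      = ε * ((b - a) ^ 2 / 2 * Real.exp (-(L + M) / ε)) := by
        simp only [a, b]; field_simp; ring
    _ ≤ ε * ((b - a) ^ 2 / 2 * Real.exp (min a b)) := by gcongr
    _ ≤ ε * expBregman a b := by gcongr; exact sq_div_two_mul_exp_min_le_expBregman a b

lemma Finset.sq_sum_eq_sum_sq_of_pairwise {ι R : Type*} [CommSemiring R] (s : Finset ι)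
    {a : ι → R} (h : Pairwise fun i j => a i * a j = 0) :
    (∑ i ∈ s, a i) ^ 2 = ∑ i ∈ s, a i ^ 2 := by
  rw [sq, Finset.sum_mul_sum]
  refine Finset.sum_congr rfl fun i hi => ?_
  rw [Finset.sum_eq_single_of_mem i hi fun j _ hji => h hji.symm, sq]

lemma Fin.pairwise_mul_eq_zero_of_forall_lt_pred {m : ℕ} {R : Type*} [MulZeroClass R]
    {a : Fin m → R} (h : ∀ k : Fin m, (k : ℕ) + 1 < m → a k = 0) :
    Pairwise fun i j => a i * a j = 0 := fun i j hij => by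
  rcases Fin.lt_or_lt_of_ne hij with hlt | hlt
  · rw [h i (by omega), zero_mul]
  · rw [h j (by omega), mul_zero]

section Pi

variable {ι : Type*} [Fintype ι] {X : ι → Type*} [∀ i, MeasurableSpace (X i)]
  {μ : (i : ι) → Measure (X i)} [∀ i, IsProbabilityMeasure (μ i)]

lemma memLp_sum_comp_eval {p : ℝ≥0∞} {f : (i : ι) → X i → ℝ} (hf : ∀ i, MemLp (f i) p (μ i)) :
    MemLp (fun y => ∑ i, f i (y i)) p (Measure.pi μ) :=
  memLp_finsetSum _ fun i _ => (hf i).comp_measurePreserving (measurePreserving_eval μ i)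

lemma integral_sum_comp_eval {f : (i : ι) → X i → ℝ} (hf : ∀ i, Integrable (f i) (μ i)) :
    ∫ y, ∑ i, f i (y i) ∂Measure.pi μ = ∑ i, ∫ x, f i x ∂μ i := by
  rw [integral_finsetSum _ fun i _ => integrable_comp_eval (hf i)]
  exact Finset.sum_congr rfl fun i _ => integral_comp_eval (hf i).aestronglyMeasurable

lemma integral_sq_sum_comp_eval {h : (i : ι) → X i → ℝ} (hh : ∀ i, MemLp (h i) 2 (μ i)) :
    ∫ y, (∑ i, h i (y i)) ^ 2 ∂Measure.pi μ
      = ∑ i, ∫ x, h i x ^ 2 ∂μ i + (∑ i, ∫ x, h i x ∂μ i) ^ 2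
        - ∑ i, (∫ x, h i x ∂μ i) ^ 2 := by
  have hvar := variance_sum_pi hh
  have hsum : MemLp (∑ i, fun y : (Π i, X i) => h i (y i)) 2 (Measure.pi μ) :=
    memLp_finsetSum' _ fun i _ => (hh i).comp_measurePreserving (measurePreserving_eval μ i)
  rw [variance_eq_sub hsum, Finset.sum_congr rfl fun i _ => variance_eq_sub (hh i)] at hvar
  simp only [Finset.sum_apply, Pi.pow_apply] at hvar
  rw [integral_sum_comp_eval fun i => (hh i).integrable one_le_two,
    Finset.sum_sub_distrib] at hvar
  linarith

lemma integral_sq_sum_comp_eval_of_pairwise {h : (i : ι) → X i → ℝ}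
    (hh : ∀ i, MemLp (h i) 2 (μ i))
    (hmean : Pairwise fun i j => (∫ x, h i x ∂μ i) * ∫ x, h j x ∂μ j = 0) :
    ∫ y, (∑ i, h i (y i)) ^ 2 ∂Measure.pi μ = ∑ i, ∫ x, h i x ^ 2 ∂μ i := by
  rw [integral_sq_sum_comp_eval hh, Finset.sq_sum_eq_sum_sq_of_pairwise _ hmean,
    add_sub_cancel_right]

end Pi

lemma measurable_costα {m d : ℕ} (α : Fin m → ℝ) : Measurable (costα (d := d) α) := by
  refine Finset.measurable_sum _ fun i _ => Finset.measurable_sum _ fun j _ => ?_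
  split_ifs <;> fun_prop

lemma costα_nonneg {m d : ℕ} (α : Fin m → ℝ) (x : Fin m → Euc d) : 0 ≤ costα α x :=
  Finset.sum_nonneg fun i _ => Finset.sum_nonneg fun j _ => by split_ifs <;> positivity

noncomputable def dualExponent {m d : ℕ} (α : Fin m → ℝ) (ε : ℝ) (f : Fin m → Euc d → ℝ)
    (y : Fin m → Euc d) : ℝ :=
  (∑ j, f j (y j) - costα α y) / ε

section DualObjective

variable {m d : ℕ} {ν : Fin m → Measure (Euc d)} [∀ j, IsProbabilityMeasure (ν j)]
  {α : Fin m → ℝ} {ε : ℝ} {f g : Fin m → Euc d → ℝ}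

lemma integrable_exp_dualExponent (hε : 0 < ε) (hf : ∀ j, MemLp (f j) ∞ (ν j)) :
    Integrable (fun y => Real.exp (dualExponent α ε f y)) (Measure.pi ν) := by
  have hF := memLp_sum_comp_eval hf
  have hmeas : AEStronglyMeasurable (dualExponent α ε f) (Measure.pi ν) := by
    have := hF.aestronglyMeasurable
    have := measurable_costα (d := d) α
    unfold dualExponent
    fun_prop
  refine .of_bound (Real.continuous_exp.comp_aestronglyMeasurable hmeas)
    (Real.exp (lpNorm (fun y => ∑ j, f j (y j)) ∞ (Measure.pi ν) / ε)) ?_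
  filter_upwards [ae_le_lpNorm_exponent_top hF] with y hy
  rw [Real.norm_of_nonneg (Real.exp_pos _).le, Real.exp_le_exp, dualExponent]
  gcongr
  linarith [le_of_abs_le hy, costα_nonneg α y]

lemma dualObj_eq_integral (hf : ∀ j, Integrable (f j) (ν j))
    (hexp : Integrable (fun y => Real.exp (dualExponent α ε f y)) (Measure.pi ν)) :
    dualObj α ε ν f
      = ∫ y, (∑ j, f j (y j) - ε * Real.exp (dualExponent α ε f y)) ∂Measure.pi ν := by
  rw [integral_sub (integrable_finsetSum _ fun j _ => integrable_comp_eval (hf j))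
    (hexp.const_mul ε), integral_const_mul, integral_sum_comp_eval hf]
  rfl

lemma integral_le_dualObj_sub_dualObj_sub_gradPairing (hε : 0 < ε)
    (hf : ∀ j, MemLp (f j) ∞ (ν j)) (hg : ∀ j, MemLp (g j) ∞ (ν j))
    {φ : (Fin m → Euc d) → ℝ} (hφ : Integrable φ (Measure.pi ν))
    (hφle : ∀ᵐ y ∂Measure.pi ν,
      φ y ≤ ε * expBregman (dualExponent α ε f y) (dualExponent α ε g y)) :
    ∫ y, φ y ∂Measure.pi ν
      ≤ dualObj α ε ν f - dualObj α ε ν g - gradPairing α ε ν f (fun j x => f j x - g j x) := by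
  have hEf := integrable_exp_dualExponent (α := α) hε hf
  have hEg := integrable_exp_dualExponent (α := α) hε hg
  have hFG := memLp_sum_comp_eval fun j => (hf j).sub (hg j)
  have hAf : Integrable (fun y => ∑ j, f j (y j) - ε * Real.exp (dualExponent α ε f y))
      (Measure.pi ν) := ((memLp_sum_comp_eval hf).integrable le_top).sub (hEf.const_mul ε)
  have hAg : Integrable (fun y => ∑ j, g j (y j) - ε * Real.exp (dualExponent α ε g y))
      (Measure.pi ν) := ((memLp_sum_comp_eval hg).integrable le_top).sub (hEg.const_mul ε)
  have hgrad : Integrable (fun y => (∑ j, (f j (y j) - g j (y j))) *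
      (1 - Real.exp ((∑ i, f i (y i) - costα α y) / ε))) (Measure.pi ν) :=
    ((integrable_const 1).sub hEf).mul_of_top_right hFG
  rw [dualObj_eq_integral (fun j => (hf j).integrable le_top) hEf,
    dualObj_eq_integral (fun j => (hg j).integrable le_top) hEg, gradPairing,
    ← integral_sub hAf hAg, ← integral_sub (hAf.sub' hAg) hgrad]
  refine integral_mono_ae hφ ((hAf.sub' hAg).sub' hgrad)
    (hφle.mono fun y hy => hy.trans_eq ?_)
  rw [dualExponent, dualExponent, mul_expBregman_eq hε.ne', ← Finset.sum_sub_distrib]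
  rfl

lemma gradPairing_le_dualObj_sub_dualObj (hε : 0 < ε) (hf : ∀ j, MemLp (f j) ∞ (ν j))
    (hg : ∀ j, MemLp (g j) ∞ (ν j)) :
    gradPairing α ε ν f (fun j x => f j x - g j x) ≤ dualObj α ε ν f - dualObj α ε ν g := by
  have h := integral_le_dualObj_sub_dualObj_sub_gradPairing (α := α) hε hf hg
    (φ := fun _ => 0) (integrable_zero _ _ _)
    (ae_of_all _ fun y => mul_nonneg hε.le (expBregman_nonneg _ _))
  rw [integral_zero] at h
  linarith

lemma gradPairing_add_le_dualObj_sub_dualObj (hε : 0 < ε) (hf : ∀ j, MemLp (f j) ∞ (ν j))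
    (hg : ∀ j, MemLp (g j) ∞ (ν j)) {L M : ℝ}
    (hfL : ∀ᵐ y ∂Measure.pi ν, |∑ j, f j (y j)| ≤ L)
    (hgL : ∀ᵐ y ∂Measure.pi ν, |∑ j, g j (y j)| ≤ L)
    (hM : ∀ᵐ y ∂Measure.pi ν, costα α y ≤ M)
    (hmean : ∀ k : Fin m, (k : ℕ) + 1 < m → ∫ x, f k x ∂ν k = ∫ x, g k x ∂ν k) :
    gradPairing α ε ν f (fun j x => f j x - g j x)
        + ε⁻¹ * Real.exp (-(L + M) / ε) / 2 * ∑ j, ∫ x, (f j x - g j x) ^ 2 ∂ν j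
      ≤ dualObj α ε ν f - dualObj α ε ν g := by
  have hfg j : MemLp (fun x => f j x - g j x) 2 (ν j) :=
    ((hf j).sub (hg j)).mono_exponent le_top
  have hcross := Fin.pairwise_mul_eq_zero_of_forall_lt_pred
      (a := fun k => ∫ x, f k x - g k x ∂ν k) fun k hk => by
    rw [integral_sub ((hf k).integrable le_top) ((hg k).integrable le_top), hmean k hk, sub_self]
  have h := integral_le_dualObj_sub_dualObj_sub_gradPairing hε hf hg
    (φ := fun y => ε⁻¹ * Real.exp (-(L + M) / ε) / 2 * (∑ j, (f j (y j) - g j (y j))) ^ 2)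
    ((memLp_sum_comp_eval hfg).integrable_sq.const_mul _) (by
      filter_upwards [hfL, hgL, hM] with y hfy hgy hcy
      rw [Finset.sum_sub_distrib]
      exact mul_exp_mul_sq_le_mul_expBregman hε (neg_le_of_abs_le hfy) (neg_le_of_abs_le hgy) hcy)
  rw [integral_const_mul, integral_sq_sum_comp_eval_of_pairwise hfg hcross] at h
  linarith

end DualObjective

theorem dual_objective_concavity_general {d m : ℕ}
    (ν : Fin m → Measure (Euc d)) (hν : ∀ j, IsProbabilityMeasure (ν j))
    (α : Fin m → ℝ)
    (ε : ℝ) (hε : 0 < ε)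
    (Mc : ℝ) (hMc : ∀ᵐ x ∂(Measure.pi ν), costα α x ≤ Mc) :
    (∀ f g : Fin m → Euc d → ℝ,
      (∀ j, Measurable (f j)) → (∀ j, ∃ B : ℝ, ∀ᵐ x ∂(ν j), |f j x| ≤ B) →
      (∀ j, Measurable (g j)) → (∀ j, ∃ B : ℝ, ∀ᵐ x ∂(ν j), |g j x| ≤ B) →
      dualObj α ε ν f - dualObj α ε ν g ≥
        gradPairing α ε ν f (fun j x => f j x - g j x)) ∧
    (∀ L : ℝ, 0 ≤ L → ∀ f g : Fin m → Euc d → ℝ,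
      (∀ j, Measurable (f j)) → (∀ j, ∃ B : ℝ, ∀ᵐ x ∂(ν j), |f j x| ≤ B) →
      (∀ j, Measurable (g j)) → (∀ j, ∃ B : ℝ, ∀ᵐ x ∂(ν j), |g j x| ≤ B) →
      (∀ᵐ x ∂(Measure.pi ν), |∑ j, f j (x j)| ≤ L) →
      (∀ k : Fin m, (k : ℕ) + 1 < m → ∫ x, f k x ∂(ν k) = 0) →
      (∀ᵐ x ∂(Measure.pi ν), |∑ j, g j (x j)| ≤ L) →
      (∀ k : Fin m, (k : ℕ) + 1 < m → ∫ x, g k x ∂(ν k) = 0) →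
      dualObj α ε ν f - dualObj α ε ν g ≥
        gradPairing α ε ν f (fun j x => f j x - g j x)
          + (ε⁻¹ * Real.exp (-(L + Mc) / ε)) / 2
            * ∑ j, ∫ x, (f j x - g j x) ^ 2 ∂(ν j)) := by
  have hLinf (f : Fin m → Euc d → ℝ) (hfm : ∀ j, Measurable (f j))
      (hfb : ∀ j, ∃ B : ℝ, ∀ᵐ x ∂(ν j), |f j x| ≤ B) (j : Fin m) : MemLp (f j) ∞ (ν j) :=
    let ⟨B, hB⟩ := hfb j
    memLp_top_of_bound (hfm j).aestronglyMeasurable B hB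
  refine ⟨fun f g hfm hfb hgm hgb =>
      gradPairing_le_dualObj_sub_dualObj hε (hLinf f hfm hfb) (hLinf g hgm hgb),
    fun L _ f g hfm hfb hgm hgb hfL hf0 hgL hg0 =>
      gradPairing_add_le_dualObj_sub_dualObj hε (hLinf f hfm hfb) (hLinf g hgm hgb) hfL hgL hMc
        fun k hk => (hf0 k hk).trans (hg0 k hk).symm⟩

/-- **Concavity and strong concavity of the dual objective.** (i) `Φ_{α,ε}` is concave:
`Φ_{α,ε}(f) − Φ_{α,ε}(g) ≥ ⟨∇Φ_{α,ε}(f), f − g⟩` for all tuples of (essentially) bounded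
measurable functions; (ii) on the set `S_L` of tuples with `‖∑ j f j (x j)‖_{L^∞(⊗ν)} ≤ L`
and `∫ f i dν i = 0` for `i ∈ {1,…,m−1}`, it is `β`-strongly concave with
`β = ε⁻¹ exp(−(L + ‖c_α‖_∞)/ε)`. -/
theorem dual_objective_concavity {d m : ℕ} (hm : 0 < m)
    (𝒳 : Set (Euc d)) (h𝒳c : IsCompact 𝒳) (h𝒳b : ∀ x ∈ 𝒳, ∀ i, |x i| ≤ 1)
    (h𝒳int : (interior 𝒳).Nonempty)
    (ν : Fin m → Measure (Euc d)) (hν : ∀ j, IsProbabilityMeasure (ν j))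
    (hνsupp : ∀ j, ν j 𝒳 = 1)
    (α : Fin m → ℝ) (hα : ∀ i, 0 ≤ α i) (hα1 : ∑ i, α i = 1)
    (ε : ℝ) (hε : 0 < ε)
    (Mc : ℝ) (hMc : ∀ᵐ x ∂(Measure.pi ν), costα α x ≤ Mc) :
    (∀ f g : Fin m → Euc d → ℝ,
      (∀ j, Measurable (f j)) → (∀ j, ∃ B : ℝ, ∀ᵐ x ∂(ν j), |f j x| ≤ B) →
      (∀ j, Measurable (g j)) → (∀ j, ∃ B : ℝ, ∀ᵐ x ∂(ν j), |g j x| ≤ B) →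
      dualObj α ε ν f - dualObj α ε ν g ≥
        gradPairing α ε ν f (fun j x => f j x - g j x)) ∧
    (∀ L : ℝ, 0 ≤ L → ∀ f g : Fin m → Euc d → ℝ,
      (∀ j, Measurable (f j)) → (∀ j, ∃ B : ℝ, ∀ᵐ x ∂(ν j), |f j x| ≤ B) →
      (∀ j, Measurable (g j)) → (∀ j, ∃ B : ℝ, ∀ᵐ x ∂(ν j), |g j x| ≤ B) →
      (∀ᵐ x ∂(Measure.pi ν), |∑ j, f j (x j)| ≤ L) →
      (∀ k : Fin m, (k : ℕ) + 1 < m → ∫ x, f k x ∂(ν k) = 0) →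
      (∀ᵐ x ∂(Measure.pi ν), |∑ j, g j (x j)| ≤ L) →
      (∀ k : Fin m, (k : ℕ) + 1 < m → ∫ x, g k x ∂(ν k) = 0) →
      dualObj α ε ν f - dualObj α ε ν g ≥
        gradPairing α ε ν f (fun j x => f j x - g j x)
          + (ε⁻¹ * Real.exp (-(L + Mc) / ε)) / 2
            * ∑ j, ∫ x, (f j x - g j x) ^ 2 ∂(ν j)) :=
  dual_objective_concavity_general ν hν α ε hε Mc hMc
end
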